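/- With f(ρ) = max_{P^T P = I_d} trace(P^T(A − ρB)P), A symmetric, B symmetric positive definite, the equation f(ρ) = 0 has a unique solution ρ*, and ρ* equals the maximum of the trace ratio trace(P^T A P)/trace(P^T B P) over the Stiefel manifold. -/

import Mathlib

/-!
For `b > 0` on a set `S`, a number `ρ` is the maximum of `a / b` over `S` exactly when the maximum
of `a - ρ * b` over `S` is `0`. With `a P = trace (Pᵀ A P)` and `b P = trace (Pᵀ B P)`, which is
positive on the Stiefel manifold because `Pᵀ B P` is positive definite there, the zeros of `f` are
therefore exactly the greatest values of the trace ratio, of which there is at most one; one exists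
because the Stiefel manifold is compact.
-/

open Matrix

lemma isGreatest_image_div_iff_isGreatest_image_sub_mul {X : Type*} {S : Set X} {a b : X → ℝ}
    (hb : ∀ x ∈ S, 0 < b x) (ρ : ℝ) :
    IsGreatest ((fun x => a x / b x) '' S) ρ ↔ IsGreatest ((fun x => a x - ρ * b x) '' S) 0 := by
  have hle : ∀ x ∈ S, a x / b x ≤ ρ ↔ a x - ρ * b x ≤ 0 := fun x hx => by
    rw [div_le_iff₀ (hb x hx), sub_nonpos]
  have heq : ∀ x ∈ S, a x / b x = ρ ↔ a x - ρ * b x = 0 := fun x hx => by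
    rw [div_eq_iff (hb x hx).ne', sub_eq_zero]
  simp only [IsGreatest, mem_upperBounds, Set.forall_mem_image]
  constructor
  · rintro ⟨⟨x, hx, hρ⟩, hub⟩
    exact ⟨⟨x, hx, (heq x hx).1 hρ⟩, fun y hy => (hle y hy).1 (hub hy)⟩
  · rintro ⟨⟨x, hx, hρ⟩, hub⟩
    exact ⟨⟨x, hx, (heq x hx).2 hρ⟩, fun y hy => (hle y hy).2 (hub hy)⟩

section Stiefel

variable {m n : Type*} [Fintype m] [DecidableEq n]

lemma sq_le_one_of_transpose_mul_self_eq_one {P : Matrix m n ℝ} (hP : Pᵀ * P = 1) (i : m)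
    (j : n) : P i j ^ 2 ≤ 1 := by
  have hcol : ∑ k, P k j ^ 2 = 1 := by
    simpa [mul_apply, sq] using congrFun (congrFun hP j) j
  rw [← hcol]
  exact Finset.single_le_sum (f := fun k => P k j ^ 2) (fun k _ => sq_nonneg _) (Finset.mem_univ i)

lemma isCompact_setOf_transpose_mul_self_eq_one :
    IsCompact {P : Matrix m n ℝ | Pᵀ * P = 1} := by
  have hclosed : IsClosed {P : Matrix m n ℝ | Pᵀ * P = 1} :=
    isClosed_eq (by fun_prop) continuous_const
  refine (isCompact_univ_pi fun _ => isCompact_univ_pi fun _ => isCompact_Icc (a := (-1 : ℝ))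
    (b := 1)).of_isClosed_subset hclosed fun P hP i _ j _ => ?_
  exact abs_le.mp ((sq_le_one_iff_abs_le_one _).mp (sq_le_one_of_transpose_mul_self_eq_one hP i j))

lemma Matrix.PosDef.trace_transpose_mul_mul_pos [Fintype n] [Nonempty n] {B : Matrix m m ℝ}
    (hB : B.PosDef) {P : Matrix m n ℝ} (hP : Pᵀ * P = 1) : 0 < (Pᵀ * B * P).trace := by
  have hinj : Function.Injective P.mulVec := Function.LeftInverse.injective (g := Pᵀ.mulVec)
    fun x => by rw [mulVec_mulVec, hP, one_mulVec]
  simpa using (hB.conjTranspose_mul_mul_same hinj).trace_pos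

end Stiefel

theorem stmt_5_general (n d : ℕ) (hd : 0 < d)
    (A B : Matrix (Fin n) (Fin n) ℝ) (hB : B.PosDef)
    (f : ℝ → ℝ)
    (hf : ∀ ρ : ℝ, IsGreatest
      {r : ℝ | ∃ P : Matrix (Fin n) (Fin d) ℝ, Pᵀ * P = 1 ∧
        (Pᵀ * (A - ρ • B) * P).trace = r} (f ρ)) :
    (∃! ρstar : ℝ, f ρstar = 0) ∧
    ∀ ρstar : ℝ, f ρstar = 0 →
      IsGreatest
        {r : ℝ | ∃ P : Matrix (Fin n) (Fin d) ℝ, Pᵀ * P = 1 ∧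
          (Pᵀ * A * P).trace / (Pᵀ * B * P).trace = r} ρstar := by
  have : Nonempty (Fin d) := ⟨⟨0, hd⟩⟩
  set S := {P : Matrix (Fin n) (Fin d) ℝ | Pᵀ * P = 1}
  set ratio := fun P : Matrix (Fin n) (Fin d) ℝ => (Pᵀ * A * P).trace / (Pᵀ * B * P).trace
  have hb : ∀ P ∈ S, 0 < (Pᵀ * B * P).trace := fun P hP => hB.trace_transpose_mul_mul_pos hP
  have hS : S.Nonempty := let ⟨P, hP, _⟩ := (hf 0).1; ⟨P, hP⟩
  have hcont : ContinuousOn ratio S :=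
    ContinuousOn.div (by fun_prop) (by fun_prop) fun P hP => (hb P hP).ne'
  obtain ⟨Pmax, hPmax, hmax⟩ := isCompact_setOf_transpose_mul_self_eq_one.exists_isMaxOn hS hcont
  have hratio_max : IsGreatest (ratio '' S) (ratio Pmax) :=
    ⟨Set.mem_image_of_mem _ hPmax, Set.forall_mem_image.2 hmax⟩
  have hgreatest_iff : ∀ ρ, IsGreatest (ratio '' S) ρ ↔ f ρ = 0 := fun ρ => by
    have hfρ := hf ρ
    simp only [Matrix.mul_sub, Matrix.sub_mul, Matrix.mul_smul, Matrix.smul_mul, trace_sub,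
      trace_smul, smul_eq_mul] at hfρ
    rw [isGreatest_image_div_iff_isGreatest_image_sub_mul hb]
    exact ⟨hfρ.unique, fun h => h ▸ hfρ⟩
  exact ⟨⟨_, (hgreatest_iff _).1 hratio_max,
      fun ρ hρ => ((hgreatest_iff ρ).2 hρ).unique hratio_max⟩,
    fun ρ hρ => (hgreatest_iff ρ).2 hρ⟩

theorem stmt_5 (n d : ℕ) (hd : 0 < d) (hdn : d ≤ n)
    (A B : Matrix (Fin n) (Fin n) ℝ) (hA : A.IsSymm) (hB : B.PosDef)
    (f : ℝ → ℝ)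
    (hf : ∀ ρ : ℝ, IsGreatest
      {r : ℝ | ∃ P : Matrix (Fin n) (Fin d) ℝ, Pᵀ * P = 1 ∧
        (Pᵀ * (A - ρ • B) * P).trace = r} (f ρ)) :
    (∃! ρstar : ℝ, f ρstar = 0) ∧
    ∀ ρstar : ℝ, f ρstar = 0 →
      IsGreatest
        {r : ℝ | ∃ P : Matrix (Fin n) (Fin d) ℝ, Pᵀ * P = 1 ∧
          (Pᵀ * A * P).trace / (Pᵀ * B * P).trace = r} ρstar :=
  stmt_5_general n d hd A B hB f hf
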